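/- arXiv:2405.20748 — 2 statements merged into one kernel-verified Lean document; each statement's English description precedes it below -/
import Mathlib

section
/- Let S ≥ 1 and let u, v, w ∈ ℝ^S. If all six outer products x yᵀ, for x, y ranging over {u, v, w} with x ≠ y, are equal as S×S matrices, then either the rank-one tensor u ⊗ v ⊗ w is the zero tensor, or u = v = w. (This is the dichotomy underlying the paper's Necessary Condition of No Redundancy: a triple of generating vectors whose pairwise outer products all coincide either contributes nothing to the synthesized tensor or is a fully symmetric triple.) -/
/-- The outer product `x yᵀ` of two vectors in `ℝ^S`, as an `S × S` real matrix. -/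
def outer {S : ℕ} (x y : Fin S → ℝ) : Matrix (Fin S) (Fin S) ℝ :=
  Matrix.of fun a b => x a * y b

/-- The rank-one tensor `u ⊗ v ⊗ w`. -/
def rk1 {S : ℕ} (u v w : Fin S → ℝ) : Fin S → Fin S → Fin S → ℝ :=
  fun a b c => u a * v b * w c

/-- If all six outer products `x yᵀ`, for `x, y` ranging over `{u, v, w}` with `x ≠ y`,
coincide, then either `u ⊗ v ⊗ w = 0` or `u = v = w`. -/
theorem all_outers_eq_dichotomy (S : ℕ) (hS : 1 ≤ S) (u v w : Fin S → ℝ)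
    (h1 : outer u v = outer u w)
    (h2 : outer u v = outer v u)
    (h3 : outer u v = outer v w)
    (h4 : outer u v = outer w u)
    (h5 : outer u v = outer w v) :
    rk1 u v w = 0 ∨ (u = v ∧ v = w) := by
  by_cases hu : u = 0
  · left; funext a b c; simp [rk1, hu]
  · obtain ⟨a, ha⟩ := Function.ne_iff.mp hu
    simp only [Pi.zero_apply] at ha
    -- v = w from h1
    have hvw : v = w := by
      funext b'
      have := congrFun (congrFun h1 a) b'
      simp only [outer, Matrix.of_apply] at this
      exact mul_left_cancel₀ ha this
    by_cases hv : v = 0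
    · left; funext a b c; simp [rk1, hv]
    · obtain ⟨b, hb⟩ := Function.ne_iff.mp hv
      simp only [Pi.zero_apply] at hb
      -- u a = v a from h3
      have hav : u a = v a := by
        have := congrFun (congrFun h3 a) b
        simp only [outer, Matrix.of_apply, ← hvw] at this
        exact mul_right_cancel₀ hb this
      -- u = v from h2
      have huv : u = v := by
        funext b'
        have := congrFun (congrFun h2 a) b'
        simp only [outer, Matrix.of_apply, ← hav] at this
        exact (mul_left_cancel₀ ha this).symm
      exact Or.inr ⟨huv, hvw⟩
end

section
/- Let S ≥ 1, R ≥ 2, and let T : Fin S → Fin S → Fin S → ℝ be a tensor with a decomposition T = Σ_{i=1}^{R} u_i ⊗ v_i ⊗ w_i into R rank-one terms. Suppose for some index j all six outer products x yᵀ, for x, y ranging over {u_j, v_j, w_j} with x ≠ y, are equal as S×S matrices, and suppose the three vectors u_j, v_j, w_j are not all equal. Then T admits a decomposition into R − 1 rank-one terms (the given decomposition has redundancy). (This is the provable case of the paper's Theorem 1, Necessary Condition of No Redundancy.) -/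
/-- Necessary condition of no redundancy (provable case): if in a decomposition
`T = Σ_{i=1}^R u_i ⊗ v_i ⊗ w_i` some term `j` has all six pairwise outer products
of `u_j, v_j, w_j` equal, but `u_j, v_j, w_j` are not all equal, then `T` admits
a decomposition into `R - 1` rank-one terms. -/
theorem no_redundancy_necessary_condition (S R : ℕ) (hS : 1 ≤ S) (hR : 2 ≤ R)
    (T : Fin S → Fin S → Fin S → ℝ)
    (u v w : Fin R → Fin S → ℝ)
    (hT : T = ∑ i : Fin R, rk1 (u i) (v i) (w i))
    (j : Fin R)
    (h1 : outer (u j) (v j) = outer (u j) (w j))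
    (h2 : outer (u j) (v j) = outer (v j) (u j))
    (h3 : outer (u j) (v j) = outer (v j) (w j))
    (h4 : outer (u j) (v j) = outer (w j) (u j))
    (h5 : outer (u j) (v j) = outer (w j) (v j))
    (hne : ¬ (u j = v j ∧ v j = w j)) :
    ∃ u' v' w' : Fin (R - 1) → Fin S → ℝ,
      T = ∑ i : Fin (R - 1), rk1 (u' i) (v' i) (w' i) := by
  have e1 : ∀ a b, u j a * v j b = u j a * w j b := fun a b =>
    congrFun (congrFun h1 a) b
  have e2 : ∀ a b, u j a * v j b = v j a * u j b := fun a b =>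
    congrFun (congrFun h2 a) b
  have e3 : ∀ a b, u j a * v j b = v j a * w j b := fun a b =>
    congrFun (congrFun h3 a) b
  have hz : rk1 (u j) (v j) (w j) = 0 := by
    by_cases hu : ∀ a, u j a = 0
    · funext a b c; simp [rk1, hu a]
    · push_neg at hu
      obtain ⟨a0, ha0⟩ := hu
      have hvw : v j = w j := funext fun b => mul_left_cancel₀ ha0 (e1 a0 b)
      set c0 := v j a0 / u j a0 with hc0
      have hv : ∀ b, v j b = c0 * u j b := by
        intro b
        rw [hc0, div_mul_eq_mul_div, eq_div_iff ha0]
        linarith [e2 a0 b]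
      have hsq : u j a0 * u j a0 ≠ 0 := mul_ne_zero ha0 ha0
      have key : (c0 * c0 - c0) * (u j a0 * u j a0) = 0 := by
        have h3' := e3 a0 a0
        rw [hv a0, ← hvw, hv a0] at h3'
        linear_combination -h3'
      have key2 : c0 * (c0 - 1) = 0 := by
        rcases mul_eq_zero.mp key with h | h
        · linear_combination h
        · exact absurd h hsq
      rcases mul_eq_zero.mp key2 with hc | hc
      · funext a b c; simp [rk1, hv b, hc]
      · exfalso
        have hc1 : c0 = 1 := by linarith
        exact hne ⟨funext fun b => by rw [hv b, hc1, one_mul], hvw⟩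
  obtain ⟨n, rfl⟩ : ∃ n, R = n + 1 := ⟨R - 1, by omega⟩
  refine ⟨fun i => u (j.succAbove i), fun i => v (j.succAbove i),
    fun i => w (j.succAbove i), ?_⟩
  rw [hT, Fin.sum_univ_succAbove _ j, hz, zero_add]
  rfl
end
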